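/- arXiv:2508.12607 — 2 statements merged into one kernel-verified Lean document; each statement's English description precedes it below -/
import Mathlib

section
/- Let K be a field, m ≥ 2 an integer, G a finite simple graph on [n] and v any vertex of G. Then J_{K_m,G_v} + (P_v + J_{K_m,G∖v}) = P_v + J_{K_m,G_v∖v} as ideals of S = K[x_{ij} : i ∈ [m], j ∈ [n]]. -/
/-!
Every 2-minor of an edge through `v` lies in `P_v`, so `P_v + J_{K_m,H∖v} = P_v + J_{K_m,H}` for
every graph `H`. Applied to `H = G` and `H = G_v`, and since `J_{K_m,G} ⊆ J_{K_m,G_v}`, both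
sides of the identity equal `P_v + J_{K_m,G_v}`.
-/

/-- A maximal clique of a simple graph: a clique that is maximal under inclusion. -/
def MaxClq {V : Type*} (G : SimpleGraph V) (s : Set V) : Prop :=
  G.IsClique s ∧ ∀ t : Set V, G.IsClique t → s ⊆ t → s = t

/-- An internal vertex: a vertex lying in at least two (distinct) maximal cliques. -/
def InternalVtx {V : Type*} (G : SimpleGraph V) (v : V) : Prop :=
  ∃ s t : Set V, MaxClq G s ∧ MaxClq G t ∧ s ≠ t ∧ v ∈ s ∧ v ∈ t

/-- `iv G`: the number of internal vertices of `G`. -/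
noncomputable def ivNum {V : Type*} (G : SimpleGraph V) : ℕ :=
  {v : V | InternalVtx G v}.ncard

/-- `c G`: the number of connected components of `G`. -/
noncomputable def compNum {V : Type*} (G : SimpleGraph V) : ℕ :=
  Nat.card G.ConnectedComponent

/-- `𝒞 G`: the number of maximal cliques of `G`. -/
noncomputable def maxClqNum {V : Type*} (G : SimpleGraph V) : ℕ :=
  {s : Set V | MaxClq G s}.ncard

/-- `ω G`: the clique number of `G`, the maximum size of a clique. -/
noncomputable def clqNum {V : Type*} (G : SimpleGraph V) : ℕ :=
  sSup {k : ℕ | ∃ s : Set V, G.IsClique s ∧ s.ncard = k}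

/-- A set of edges of `G` is clique-disjoint if no two distinct edges of it are both
contained in a single clique of `G`. -/
def CliqueDisjointEdges {V : Type*} (G : SimpleGraph V) (E : Set (Sym2 V)) : Prop :=
  E ⊆ G.edgeSet ∧ ∀ e ∈ E, ∀ f ∈ E, e ≠ f →
    ¬ ∃ s : Set V, G.IsClique s ∧ (∀ x ∈ e, x ∈ s) ∧ (∀ x ∈ f, x ∈ s)

/-- `η G`: the maximum cardinality of a clique-disjoint set of edges of `G`. -/
noncomputable def etaNum {V : Type*} (G : SimpleGraph V) : ℕ :=
  sSup {k : ℕ | ∃ E : Set (Sym2 V), CliqueDisjointEdges G E ∧ E.ncard = k}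

/-- `G_v`: the graph on the same vertex set as `G` whose edges are those of `G` together
with all edges between distinct neighbours of `v`. -/
def addNbrEdges {V : Type*} (G : SimpleGraph V) (v : V) : SimpleGraph V where
  Adj a b := G.Adj a b ∨ (a ≠ b ∧ G.Adj v a ∧ G.Adj v b)
  symm := by
    constructor
    intro a b h
    rcases h with h | ⟨hne, h1, h2⟩
    · exact Or.inl h.symm
    · exact Or.inr ⟨hne.symm, h2, h1⟩
  loopless := by
    constructor
    intro a h
    rcases h with h | ⟨hne, _, _⟩
    · exact G.loopless.irrefl a h
    · exact hne rfl

/-- The graph `G ∖ v`: the vertex `v` is isolated and the remaining edges are exactly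
those of the induced subgraph of `G` on the complement of `v`, so that the binomial
edge ideal generators of `G ∖ v` are exactly those coming from edges of `G` avoiding `v`. -/
def delVtx {V : Type*} (G : SimpleGraph V) (v : V) : SimpleGraph V where
  Adj a b := G.Adj a b ∧ a ≠ v ∧ b ≠ v
  symm := by
    constructor
    rintro a b ⟨h, ha, hb⟩
    exact ⟨h.symm, hb, ha⟩
  loopless := by
    constructor
    rintro a ⟨h, _, _⟩
    exact G.loopless.irrefl a h

open MvPolynomial in
/-- The generalized binomial edge ideal `J_{K_m, G}` of a graph `G` on `[n]`, inside
`S = K[x_{ij} : i ∈ [m], j ∈ [n]]`: it is generated by the `2`-minors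
`x_{ik} x_{jl} − x_{il} x_{jk}` for `1 ≤ i < j ≤ m` and `{k, l} ∈ E(G)`. -/
noncomputable def genBEI (K : Type*) [Field K] (m n : ℕ) (G : SimpleGraph (Fin n)) :
    Ideal (MvPolynomial (Fin m × Fin n) K) :=
  Ideal.span {f | ∃ (i j : Fin m) (k l : Fin n), i < j ∧ G.Adj k l ∧
    f = X (i, k) * X (j, l) - X (i, l) * X (j, k)}

open MvPolynomial in
/-- `P_v = (x_{1v}, …, x_{mv})`. -/
noncomputable def Pvert (K : Type*) [Field K] (m n : ℕ) (v : Fin n) :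
    Ideal (MvPolynomial (Fin m × Fin n) K) :=
  Ideal.span (Set.range fun i : Fin m => X (i, v))

open MvPolynomial

section GeneralizedBinomialEdgeIdeal

variable {K : Type*} [Field K] {m n : ℕ}

theorem addNbrEdges_le {V : Type*} (G : SimpleGraph V) (v : V) : G ≤ addNbrEdges G v :=
  fun _ _ h => Or.inl h

theorem delVtx_le {V : Type*} (G : SimpleGraph V) (v : V) : delVtx G v ≤ G :=
  fun _ _ h => h.1

theorem genBEI_mono {G H : SimpleGraph (Fin n)} (h : G ≤ H) :
    genBEI K m n G ≤ genBEI K m n H := by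
  refine Ideal.span_mono ?_
  rintro f ⟨i, j, k, l, hij, hadj, rfl⟩
  exact ⟨i, j, k, l, hij, h hadj, rfl⟩

theorem minor_mem_Pvert {v k l : Fin n} (hv : k = v ∨ l = v) (i j : Fin m) :
    X (i, k) * X (j, l) - X (i, l) * X (j, k) ∈ Pvert K m n v := by
  have hX : ∀ i, (X (i, v) : MvPolynomial (Fin m × Fin n) K) ∈ Pvert K m n v :=
    fun i => Ideal.subset_span ⟨i, rfl⟩
  rcases hv with rfl | rfl
  · exact sub_mem (Ideal.mul_mem_right _ _ (hX i)) (Ideal.mul_mem_left _ _ (hX j))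
  · exact sub_mem (Ideal.mul_mem_left _ _ (hX j)) (Ideal.mul_mem_right _ _ (hX i))

theorem genBEI_le_Pvert_sup_genBEI_delVtx (G : SimpleGraph (Fin n)) (v : Fin n) :
    genBEI K m n G ≤ Pvert K m n v ⊔ genBEI K m n (delVtx G v) := by
  rw [genBEI, Ideal.span_le]
  rintro f ⟨i, j, k, l, hij, hadj, rfl⟩
  by_cases hv : k = v ∨ l = v
  · exact Ideal.mem_sup_left (minor_mem_Pvert hv i j)
  · exact Ideal.mem_sup_right
      (Ideal.subset_span ⟨i, j, k, l, hij, ⟨hadj, not_or.mp hv⟩, rfl⟩)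

theorem Pvert_sup_genBEI_delVtx (G : SimpleGraph (Fin n)) (v : Fin n) :
    Pvert K m n v ⊔ genBEI K m n (delVtx G v) = Pvert K m n v ⊔ genBEI K m n G :=
  le_antisymm (sup_le_sup_left (genBEI_mono (delVtx_le G v)) _)
    (sup_le le_sup_left (genBEI_le_Pvert_sup_genBEI_delVtx G v))

end GeneralizedBinomialEdgeIdeal

theorem stmt3_general (K : Type*) [Field K] (m n : ℕ) (G : SimpleGraph (Fin n))
    (v : Fin n) :
    genBEI K m n (addNbrEdges G v) + (Pvert K m n v + genBEI K m n (delVtx G v)) =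
      Pvert K m n v + genBEI K m n (delVtx (addNbrEdges G v) v) := by
  have hJ :
      genBEI K m n G ⊔ genBEI K m n (addNbrEdges G v) = genBEI K m n (addNbrEdges G v) :=
    sup_eq_right.mpr (genBEI_mono (addNbrEdges_le G v))
  calc genBEI K m n (addNbrEdges G v) + (Pvert K m n v + genBEI K m n (delVtx G v))
      = genBEI K m n (addNbrEdges G v) ⊔ (Pvert K m n v ⊔ genBEI K m n G) := by
        rw [← Pvert_sup_genBEI_delVtx]; rfl
    _ = Pvert K m n v ⊔ (genBEI K m n G ⊔ genBEI K m n (addNbrEdges G v)) := by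
        rw [sup_comm, sup_assoc]
    _ = Pvert K m n v + genBEI K m n (delVtx (addNbrEdges G v) v) := by
        rw [hJ]; exact (Pvert_sup_genBEI_delVtx _ v).symm

/-- for `m ≥ 2` and any vertex `v` of `G`,
`J_{K_m,G_v} + (P_v + J_{K_m,G∖v}) = P_v + J_{K_m,G_v∖v}` as ideals of
`S = K[x_{ij} : i ∈ [m], j ∈ [n]]`. -/
theorem stmt3 (K : Type*) [Field K] (m n : ℕ) (hm : 2 ≤ m) (G : SimpleGraph (Fin n))
    (v : Fin n) :
    genBEI K m n (addNbrEdges G v) + (Pvert K m n v + genBEI K m n (delVtx G v)) =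
      Pvert K m n v + genBEI K m n (delVtx (addNbrEdges G v) v) :=
  stmt3_general K m n G v
end

section
/- Let G be a finite simple graph and v an internal vertex of G. Then ω(G_v) ≥ ω(G_v ∖ v) ≥ ω(G), where ω denotes the clique number. -/
theorem clqNum_eq_cliqueNum {V : Type*} [Finite V] (G : SimpleGraph V) :
    clqNum G = G.cliqueNum := by
  unfold clqNum SimpleGraph.cliqueNum
  congr 1
  ext n
  constructor
  · rintro ⟨s, hs, rfl⟩
    exact ⟨s.toFinite.toFinset, by simpa using hs, (Set.ncard_eq_toFinset_card s).symm⟩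
  · rintro ⟨s, hs⟩
    exact ⟨s, hs.isClique, by rw [Set.ncard_coe_finset, hs.card_eq]⟩

namespace SimpleGraph

theorem IsNClique.le_cliqueNum_induce {V : Type*} {G : SimpleGraph V} [Finite V] {S : Set V}
    {n : ℕ} {t : Finset V}
    (ht : G.IsNClique n t) (htS : ∀ x ∈ t, x ∈ S) : n ≤ (G.induce S).cliqueNum := by
  classical
  have hind : (G.induce S).IsNClique n (t.subtype (· ∈ S)) := by
    rwa [isNClique_induce_iff, Finset.subtype_map_of_mem htS]
  rw [← hind.card_eq]
  exact IsClique.card_le_cliqueNum (tc := hind.isClique)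

end SimpleGraph

open SimpleGraph

section

variable {V : Type*} {G : SimpleGraph V} {v : V}

theorem MaxClq.eq_of_neighborSet_subset {m s : Set V} (hm : MaxClq G m) (hvm : v ∈ m)
    (hs : G.IsClique s) (hvs : v ∈ s) (hN : G.neighborSet v ⊆ s) : m = s := by
  refine hm.2 s hs fun u hu => ?_
  obtain rfl | huv := eq_or_ne u v
  · exact hvs
  · exact hN (hm.1 hvm hu huv.symm)

theorem InternalVtx.exists_adj_notMem {s : Set V} (hv : InternalVtx G v) (hs : G.IsClique s)
    (hvs : v ∈ s) : ∃ w, G.Adj v w ∧ w ∉ s := by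
  obtain ⟨m₁, m₂, hm₁, hm₂, hne, hvm₁, hvm₂⟩ := hv
  by_contra! hN
  exact hne ((hm₁.eq_of_neighborSet_subset hvm₁ hs hvs hN).trans
    (hm₂.eq_of_neighborSet_subset hvm₂ hs hvs hN).symm)

theorem le_addNbrEdges (G : SimpleGraph V) (v : V) : G ≤ addNbrEdges G v :=
  fun _ _ h => Or.inl h

theorem isClique_addNbrEdges_insert_diff {s : Set V} {w : V} (hs : G.IsClique s) (hvs : v ∈ s)
    (hvw : G.Adj v w) : (addNbrEdges G v).IsClique (insert w (s \ {v})) := by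
  have hNs : ∀ x ∈ s \ {v}, G.Adj v x := fun x hx => hs hvs hx.1 (Ne.symm hx.2)
  rintro x (rfl | hx) y (rfl | hy) hxy
  · exact absurd rfl hxy
  · exact Or.inr ⟨hxy, hvw, hNs y hy⟩
  · exact Or.inr ⟨hxy, hNs x hx, hvw⟩
  · exact Or.inl (hs hx.1 hy.1 hxy)

theorem InternalVtx.exists_isNClique_addNbrEdges_notMem {n : ℕ} {s : Finset V}
    (hv : InternalVtx G v) (hs : G.IsNClique n s) :
    ∃ t : Finset V, (addNbrEdges G v).IsNClique n t ∧ v ∉ t := by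
  classical
  by_cases hvs : v ∈ s
  · obtain ⟨w, hvw, hws⟩ := hv.exists_adj_notMem hs.isClique hvs
    refine ⟨insert w (s.erase v), ⟨?_, ?_⟩, ?_⟩
    · rw [Finset.coe_insert, Finset.coe_erase]
      exact isClique_addNbrEdges_insert_diff hs.isClique hvs hvw
    · rw [Finset.card_insert_of_notMem fun h => hws (Finset.mem_of_mem_erase h),
        Finset.card_erase_add_one hvs, hs.card_eq]
    · rw [Finset.mem_insert, Finset.mem_erase]
      rintro (rfl | ⟨hvv, -⟩)
      · exact G.loopless.irrefl v hvw
      · exact hvv rfl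
  · exact ⟨s, ⟨hs.isClique.mono (le_addNbrEdges G v), hs.card_eq⟩, hvs⟩

theorem InternalVtx.cliqueNum_le_cliqueNum_induce_addNbrEdges [Finite V]
    (hv : InternalVtx G v) :
    G.cliqueNum ≤ ((addNbrEdges G v).induce {u : V | u ≠ v}).cliqueNum := by
  obtain ⟨s, hs⟩ := G.exists_isNClique_cliqueNum
  obtain ⟨t, ht, hvt⟩ := hv.exists_isNClique_addNbrEdges_notMem hs
  exact ht.le_cliqueNum_induce fun x hx hxv => hvt (hxv ▸ hx)

end

/-- if `v` is an internal vertex of `G`, then `ω(G_v) ≥ ω(G_v ∖ v) ≥ ω(G)`. -/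
theorem stmt10 {V : Type*} [Finite V] (G : SimpleGraph V) (v : V)
    (hv : InternalVtx G v) :
    clqNum G ≤ clqNum ((addNbrEdges G v).induce {u : V | u ≠ v}) ∧
    clqNum ((addNbrEdges G v).induce {u : V | u ≠ v}) ≤ clqNum (addNbrEdges G v) := by
  simp only [clqNum_eq_cliqueNum]
  exact ⟨hv.cliqueNum_le_cliqueNum_induce_addNbrEdges, cliqueNum_induce_le _⟩
end
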